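/- arXiv:math/0703587 — 6 statements merged into one kernel-verified Lean document; each statement's English description precedes it below -/
import Mathlib

section
/- Let Θ = Alt(Or₁ ∪ Or₂). Using the cyclic permutation τ = (0 1 2 3 4) and the alternating property of Or, one has the identity: Θ((x₀,y₀),…,(x₄,y₄)) = (1/30) Σ_{k=0}^{4} [Or(x_{τᵏ(0)},x_{τᵏ(1)},x_{τᵏ(2)})·Or(y_{τᵏ(0)},y_{τᵏ(3)},y_{τᵏ(4)}) + Or(x_{τᵏ(0)},x_{τᵏ(3)},x_{τᵏ(4)})·Or(y_{τᵏ(0)},y_{τᵏ(1)},y_{τᵏ(2)}) − Or(x_{τᵏ(0)},x_{τᵏ(1)},x_{τᵏ(3)})·Or(y_{τᵏ(0)},y_{τᵏ(2)},y_{τᵏ(4)}) − Or(x_{τᵏ(0)},x_{τᵏ(2)},x_{τᵏ(4)})·Or(y_{τᵏ(0)},y_{τᵏ(1)},y_{τᵏ(3)}) + Or(x_{τᵏ(0)},x_{τᵏ(1)},x_{τᵏ(4)})·Or(y_{τᵏ(0)},y_{τᵏ(2)},y_{τᵏ(3)}) + Or(x_{τᵏ(0)},x_{τᵏ(2)},x_{τᵏ(3)})·Or(y_{τᵏ(0)},y_{τᵏ(1)},y_{τᵏ(4)})].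 -/
open scoped BigOperators

/-- Orientation cocycle on the circle: +1 for positively oriented (counterclockwise)
triples of distinct points, -1 for negatively oriented triples, 0 if two coincide. -/
noncomputable def orient (a b c : Circle) : ℝ :=
  Real.sign (((starRingEnd ℂ) ((b : ℂ) - (a : ℂ)) * ((c : ℂ) - (a : ℂ))).im)

/-- `x 0, …, x (n-1)` are positively cyclically ordered according to their numbering. -/
def PosCyclicallyOrdered {n : ℕ} (x : Fin n → Circle) : Prop :=
  ∀ i j k : Fin n, i < j → j < k → orient (x i) (x j) (x k) = 1

/-- Θ = Alt(Or₁ ∪ Or₂). -/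
noncomputable def Theta (z : Fin 5 → Circle × Circle) : ℝ :=
  (1 / 120) * ∑ σ : Equiv.Perm (Fin 5),
    ((Equiv.Perm.sign σ : ℤ) : ℝ) *
      (orient (z (σ 0)).1 (z (σ 1)).1 (z (σ 2)).1 *
        orient (z (σ 2)).2 (z (σ 3)).2 (z (σ 4)).2)


lemma orient_swap (a b c : Circle) : orient a c b = - orient a b c := by
  unfold orient
  rw [← Real.sign_neg]
  congr 1
  simp [Complex.mul_im, Complex.sub_re, Complex.sub_im]
  ring

lemma orient_cyc (a b c : Circle) : orient b c a = orient a b c := by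
  unfold orient
  congr 1
  simp [Complex.mul_im, Complex.sub_re, Complex.sub_im]
  ring

lemma orient_cyc2 (a b c : Circle) : orient c a b = orient a b c := by
  rw [← orient_cyc, orient_cyc]

lemma orient_swap01 (a b c : Circle) : orient b a c = - orient a b c := by
  rw [orient_cyc2 a c b, orient_swap]

lemma orient_swap02 (a b c : Circle) : orient c b a = - orient a b c := by
  rw [orient_cyc2 b a c, orient_swap01]

set_option maxHeartbeats 4000000 in
/-- The expression of `Θ` via the cyclic permutation. -/
theorem theta_cyclic_formula (x y : Fin 5 → Circle) :
    Theta (fun i => (x i, y i)) = (1 / 30) * ∑ k : Fin 5,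
      (orient (x k) (x (k + 1)) (x (k + 2)) * orient (y k) (y (k + 3)) (y (k + 4))
        + orient (x k) (x (k + 3)) (x (k + 4)) * orient (y k) (y (k + 1)) (y (k + 2))
        - orient (x k) (x (k + 1)) (x (k + 3)) * orient (y k) (y (k + 2)) (y (k + 4))
        - orient (x k) (x (k + 2)) (x (k + 4)) * orient (y k) (y (k + 1)) (y (k + 3))
        + orient (x k) (x (k + 1)) (x (k + 4)) * orient (y k) (y (k + 2)) (y (k + 3))
        + orient (x k) (x (k + 2)) (x (k + 3)) * orient (y k) (y (k + 1)) (y (k + 4))) := by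
  unfold Theta
  simp only [Finset.univ_perm_fin_succ, Finset.sum_map, Fintype.sum_prod_type,
    Fin.sum_univ_succ, Finset.univ_unique, Finset.sum_singleton, Equiv.coe_toEmbedding,
    Equiv.Perm.decomposeFin.symm_sign,
    show (1 : Fin 5) = Fin.succ 0 from rfl, show (2 : Fin 5) = Fin.succ 1 from rfl,
    show (3 : Fin 5) = Fin.succ 2 from rfl, show (4 : Fin 5) = Fin.succ 3 from rfl,
    show (1 : Fin 4) = Fin.succ 0 from rfl, show (2 : Fin 4) = Fin.succ 1 from rfl,
    show (3 : Fin 4) = Fin.succ 2 from rfl,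
    show (1 : Fin 3) = Fin.succ 0 from rfl, show (2 : Fin 3) = Fin.succ 1 from rfl,
    show (1 : Fin 2) = Fin.succ 0 from rfl,
    Equiv.Perm.decomposeFin_symm_apply_zero, Equiv.Perm.decomposeFin_symm_apply_succ]
  simp (config := { decide := true }) only [Equiv.swap_apply_def,
    show Fin.succ (0 : Fin 4) = 1 from rfl, show Fin.succ (1 : Fin 4) = 2 from rfl,
    show Fin.succ (2 : Fin 4) = 3 from rfl, show Fin.succ (3 : Fin 4) = 4 from rfl,
    show Fin.succ (0 : Fin 3) = 1 from rfl, show Fin.succ (1 : Fin 3) = 2 from rfl,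
    show Fin.succ (2 : Fin 3) = 3 from rfl,
    show Fin.succ (0 : Fin 2) = 1 from rfl, show Fin.succ (1 : Fin 2) = 2 from rfl,
    show Fin.succ (0 : Fin 1) = 1 from rfl,
    show ((default : Equiv.Perm (Fin 1)) 0) = 0 from rfl,
    show (default : Fin 1) = 0 from rfl,
    show (Equiv.Perm.sign (default : Equiv.Perm (Fin 0)) : ℤ) = 1 from by decide,
    show (Equiv.Perm.sign (default : Equiv.Perm (Fin 1)) : ℤ) = 1 from by decide,
    Equiv.Perm.one_apply, if_true, if_false, mul_one, one_mul, neg_mul, mul_neg, neg_neg,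
    Units.val_one, Units.val_neg, Int.cast_one, Int.cast_neg]
  simp only [Fin.sum_univ_five,
    show (0:Fin 5)+1 = 1 from rfl, show (0:Fin 5)+2 = 2 from rfl, show (0:Fin 5)+3 = 3 from rfl, show (0:Fin 5)+4 = 4 from rfl,
    show (1:Fin 5)+1 = 2 from rfl, show (1:Fin 5)+2 = 3 from rfl, show (1:Fin 5)+3 = 4 from rfl, show (1:Fin 5)+4 = 0 from rfl,
    show (2:Fin 5)+1 = 3 from rfl, show (2:Fin 5)+2 = 4 from rfl, show (2:Fin 5)+3 = 0 from rfl, show (2:Fin 5)+4 = 1 from rfl,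
    show (3:Fin 5)+1 = 4 from rfl, show (3:Fin 5)+2 = 0 from rfl, show (3:Fin 5)+3 = 1 from rfl, show (3:Fin 5)+4 = 2 from rfl,
    show (4:Fin 5)+1 = 0 from rfl, show (4:Fin 5)+2 = 1 from rfl, show (4:Fin 5)+3 = 2 from rfl, show (4:Fin 5)+4 = 3 from rfl]
  simp only [orient_swap (x 0) (x 1) (x 2),
    orient_cyc (x 0) (x 1) (x 2),
    orient_cyc2 (x 0) (x 1) (x 2),
    orient_swap01 (x 0) (x 1) (x 2),
    orient_swap02 (x 0) (x 1) (x 2),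
    orient_swap (x 0) (x 1) (x 3),
    orient_cyc (x 0) (x 1) (x 3),
    orient_cyc2 (x 0) (x 1) (x 3),
    orient_swap01 (x 0) (x 1) (x 3),
    orient_swap02 (x 0) (x 1) (x 3),
    orient_swap (x 0) (x 1) (x 4),
    orient_cyc (x 0) (x 1) (x 4),
    orient_cyc2 (x 0) (x 1) (x 4),
    orient_swap01 (x 0) (x 1) (x 4),
    orient_swap02 (x 0) (x 1) (x 4),
    orient_swap (x 0) (x 2) (x 3),
    orient_cyc (x 0) (x 2) (x 3),
    orient_cyc2 (x 0) (x 2) (x 3),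
    orient_swap01 (x 0) (x 2) (x 3),
    orient_swap02 (x 0) (x 2) (x 3),
    orient_swap (x 0) (x 2) (x 4),
    orient_cyc (x 0) (x 2) (x 4),
    orient_cyc2 (x 0) (x 2) (x 4),
    orient_swap01 (x 0) (x 2) (x 4),
    orient_swap02 (x 0) (x 2) (x 4),
    orient_swap (x 0) (x 3) (x 4),
    orient_cyc (x 0) (x 3) (x 4),
    orient_cyc2 (x 0) (x 3) (x 4),
    orient_swap01 (x 0) (x 3) (x 4),
    orient_swap02 (x 0) (x 3) (x 4),
    orient_swap (x 1) (x 2) (x 3),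
    orient_cyc (x 1) (x 2) (x 3),
    orient_cyc2 (x 1) (x 2) (x 3),
    orient_swap01 (x 1) (x 2) (x 3),
    orient_swap02 (x 1) (x 2) (x 3),
    orient_swap (x 1) (x 2) (x 4),
    orient_cyc (x 1) (x 2) (x 4),
    orient_cyc2 (x 1) (x 2) (x 4),
    orient_swap01 (x 1) (x 2) (x 4),
    orient_swap02 (x 1) (x 2) (x 4),
    orient_swap (x 1) (x 3) (x 4),
    orient_cyc (x 1) (x 3) (x 4),
    orient_cyc2 (x 1) (x 3) (x 4),
    orient_swap01 (x 1) (x 3) (x 4),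
    orient_swap02 (x 1) (x 3) (x 4),
    orient_swap (x 2) (x 3) (x 4),
    orient_cyc (x 2) (x 3) (x 4),
    orient_cyc2 (x 2) (x 3) (x 4),
    orient_swap01 (x 2) (x 3) (x 4),
    orient_swap02 (x 2) (x 3) (x 4),
    orient_swap (y 0) (y 1) (y 2),
    orient_cyc (y 0) (y 1) (y 2),
    orient_cyc2 (y 0) (y 1) (y 2),
    orient_swap01 (y 0) (y 1) (y 2),
    orient_swap02 (y 0) (y 1) (y 2),
    orient_swap (y 0) (y 1) (y 3),
    orient_cyc (y 0) (y 1) (y 3),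
    orient_cyc2 (y 0) (y 1) (y 3),
    orient_swap01 (y 0) (y 1) (y 3),
    orient_swap02 (y 0) (y 1) (y 3),
    orient_swap (y 0) (y 1) (y 4),
    orient_cyc (y 0) (y 1) (y 4),
    orient_cyc2 (y 0) (y 1) (y 4),
    orient_swap01 (y 0) (y 1) (y 4),
    orient_swap02 (y 0) (y 1) (y 4),
    orient_swap (y 0) (y 2) (y 3),
    orient_cyc (y 0) (y 2) (y 3),
    orient_cyc2 (y 0) (y 2) (y 3),
    orient_swap01 (y 0) (y 2) (y 3),
    orient_swap02 (y 0) (y 2) (y 3),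
    orient_swap (y 0) (y 2) (y 4),
    orient_cyc (y 0) (y 2) (y 4),
    orient_cyc2 (y 0) (y 2) (y 4),
    orient_swap01 (y 0) (y 2) (y 4),
    orient_swap02 (y 0) (y 2) (y 4),
    orient_swap (y 0) (y 3) (y 4),
    orient_cyc (y 0) (y 3) (y 4),
    orient_cyc2 (y 0) (y 3) (y 4),
    orient_swap01 (y 0) (y 3) (y 4),
    orient_swap02 (y 0) (y 3) (y 4),
    orient_swap (y 1) (y 2) (y 3),
    orient_cyc (y 1) (y 2) (y 3),
    orient_cyc2 (y 1) (y 2) (y 3),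
    orient_swap01 (y 1) (y 2) (y 3),
    orient_swap02 (y 1) (y 2) (y 3),
    orient_swap (y 1) (y 2) (y 4),
    orient_cyc (y 1) (y 2) (y 4),
    orient_cyc2 (y 1) (y 2) (y 4),
    orient_swap01 (y 1) (y 2) (y 4),
    orient_swap02 (y 1) (y 2) (y 4),
    orient_swap (y 1) (y 3) (y 4),
    orient_cyc (y 1) (y 3) (y 4),
    orient_cyc2 (y 1) (y 3) (y 4),
    orient_swap01 (y 1) (y 3) (y 4),
    orient_swap02 (y 1) (y 3) (y 4),
    orient_swap (y 2) (y 3) (y 4),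
    orient_cyc (y 2) (y 3) (y 4),
    orient_cyc2 (y 2) (y 3) (y 4),
    orient_swap01 (y 2) (y 3) (y 4),
    orient_swap02 (y 2) (y 3) (y 4)]
  ring
end

section
/- Let Θ = Alt(Or₁ ∪ Or₂). If x₀,…,x₄ are distinct points of S¹ that are positively cyclically ordered according to their numbering, then Θ((x₀,y₀),…,(x₄,y₄)) = (1/30) Σ_{k=0}^{4} [Or(y_{τᵏ(2)},y_{τᵏ(3)},y_{τᵏ(4)}) + Or(y_{τᵏ(0)},y_{τᵏ(1)},y_{τᵏ(2)}) − Or(y_{τᵏ(0)},y_{τᵏ(1)},y_{τᵏ(3)}) + Or(y_{τᵏ(0)},y_{τᵏ(1)},y_{τᵏ(4)})], where τ = (0 1 2 3 4). In particular |Θ((x₀,y₀),…,(x₄,y₄))| ≤ 2/3 in this case. -/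
open scoped BigOperators

/- ### Auxiliary lemmas -/

lemma orient_rotate (a b c : Circle) : orient a b c = orient b c a := by
  unfold orient
  congr 1
  simp only [Complex.mul_im, Complex.sub_re, Complex.sub_im, map_sub, Complex.conj_re,
    Complex.conj_im]
  ring

lemma orient_swap23 (a b c : Circle) : orient a b c = -orient a c b := by
  unfold orient
  rw [← Real.sign_neg]
  congr 1
  simp only [Complex.mul_im, Complex.sub_re, Complex.sub_im, map_sub, Complex.conj_re,
    Complex.conj_im]
  ring

lemma orient_swap12 (a b c : Circle) : orient a b c = -orient b a c := by
  rw [orient_rotate, orient_swap23]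

lemma orient_swap13 (a b c : Circle) : orient a b c = -orient c b a := by
  rw [orient_rotate, orient_rotate, orient_swap23]

lemma orient_zero12 (a c : Circle) : orient a a c = 0 := by simp [orient]

lemma orient_zero13 (a b : Circle) : orient a b a = 0 := by simp [orient]

lemma orient_zero23 (a b : Circle) : orient a b b = 0 := by
  have h : (((starRingEnd ℂ) ((b : ℂ) - (a : ℂ)) * ((b : ℂ) - (a : ℂ))).im) = 0 := by
    simp only [Complex.mul_im, map_sub, Complex.conj_re, Complex.conj_im, Complex.sub_re,
      Complex.sub_im]
    ring
  unfold orient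
  rw [h, Real.sign_zero]

lemma orient_abs_le (a b c : Circle) : |orient a b c| ≤ 1 := by
  unfold orient
  rcases lt_trichotomy (((starRingEnd ℂ) ((b : ℂ) - (a : ℂ)) * ((c : ℂ) - (a : ℂ))).im) 0 with h|h|h
  · rw [Real.sign_of_neg h]; norm_num
  · rw [h, Real.sign_zero]; norm_num
  · rw [Real.sign_of_pos h]; norm_num

/-- cyclic-orientation sign of a triple of naturals -/
def ocyc (a b c : ℕ) : ℤ :=
  if a = b ∨ b = c ∨ a = c then 0
  else if (a < b ∧ b < c) ∨ (b < c ∧ c < a) ∨ (c < a ∧ a < b) then 1 else -1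

def cInt (σ : Equiv.Perm (Fin 5)) : ℤ :=
  (Equiv.Perm.sign σ : ℤ) * ocyc (σ 0).val (σ 1).val (σ 2).val

def coeffInt (p : Fin 5 × Fin 5 × Fin 5) : ℤ :=
  ∑ σ : Equiv.Perm (Fin 5), if (σ 2, σ 3, σ 4) = p then cInt σ else 0

def tbl : Fin 5 → Fin 5 → Fin 5 → ℤ :=
  ![![![0, 0, 0, 0, 0], ![0, 0, 2, -2, 2], ![0, -2, 0, 2, -2], ![0, 2, -2, 0, 2], ![0, -2, 2, -2, 0]],
    ![![0, 0, -2, 2, -2], ![0, 0, 0, 0, 0], ![2, 0, 0, 2, -2], ![-2, 0, -2, 0, 2], ![2, 0, 2, -2, 0]],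
    ![![0, 2, 0, 2, -2], ![-2, 0, 0, -2, 2], ![0, 0, 0, 0, 0], ![-2, 2, 0, 0, 2], ![2, -2, 0, -2, 0]],
    ![![0, 2, -2, 0, -2], ![-2, 0, 2, 0, 2], ![2, -2, 0, 0, -2], ![0, 0, 0, 0, 0], ![2, -2, 2, 0, 0]],
    ![![0, 2, -2, 2, 0], ![-2, 0, 2, -2, 0], ![2, -2, 0, 2, 0], ![-2, 2, -2, 0, 0], ![0, 0, 0, 0, 0]]]

set_option maxRecDepth 40000 in
set_option maxHeartbeats 4000000 in
lemma coeff_eval : ∀ p : Fin 5 × Fin 5 × Fin 5, coeffInt p = tbl p.1 p.2.1 p.2.2 := by decide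

lemma orientx_eq (x : Fin 5 → Circle) (hx : PosCyclicallyOrdered x) (a b c : Fin 5) :
    orient (x a) (x b) (x c) = ((ocyc a.val b.val c.val : ℤ) : ℝ) := by
  rcases eq_or_ne a b with rfl|hab
  · simp [orient_zero12, ocyc]
  rcases eq_or_ne b c with rfl|hbc
  · simp [orient_zero23, ocyc]
  rcases eq_or_ne a c with rfl|hac
  · simp [orient_zero13, ocyc]
  have vab : a.val ≠ b.val := fun h => hab (Fin.ext h)
  have vbc : b.val ≠ c.val := fun h => hbc (Fin.ext h)
  have vac : a.val ≠ c.val := fun h => hac (Fin.ext h)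
  rcases lt_trichotomy a b with h1|h1|h1
  · rcases lt_trichotomy b c with h2|h2|h2
    · -- a < b < c
      have v1 : a.val < b.val := h1
      have v2 : b.val < c.val := h2
      have ho : ocyc a.val b.val c.val = 1 := by unfold ocyc; split_ifs <;> omega
      rw [ho, hx a b c h1 h2]; norm_num
    · exact absurd h2 hbc
    · rcases lt_trichotomy a c with h3|h3|h3
      · -- a < c < b
        have v1 : a.val < b.val := h1
        have v2 : c.val < b.val := h2
        have v3 : a.val < c.val := h3
        have ho : ocyc a.val b.val c.val = -1 := by unfold ocyc; split_ifs <;> omega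
        rw [ho, orient_swap23, hx a c b h3 h2]; norm_num
      · exact absurd h3 hac
      · -- c < a < b
        have v1 : a.val < b.val := h1
        have v2 : c.val < b.val := h2
        have v3 : c.val < a.val := h3
        have ho : ocyc a.val b.val c.val = 1 := by unfold ocyc; split_ifs <;> omega
        rw [ho, ← orient_rotate (x c) (x a) (x b), hx c a b h3 h1]; norm_num
  · exact absurd h1 hab
  · rcases lt_trichotomy b c with h2|h2|h2
    · rcases lt_trichotomy a c with h3|h3|h3
      · -- b < a < c
        have v1 : b.val < a.val := h1
        have v2 : b.val < c.val := h2
        have v3 : a.val < c.val := h3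
        have ho : ocyc a.val b.val c.val = -1 := by unfold ocyc; split_ifs <;> omega
        rw [ho, orient_swap12, hx b a c h1 h3]; norm_num
      · exact absurd h3 hac
      · -- b < c < a
        have v1 : b.val < a.val := h1
        have v2 : b.val < c.val := h2
        have v3 : c.val < a.val := h3
        have ho : ocyc a.val b.val c.val = 1 := by unfold ocyc; split_ifs <;> omega
        rw [ho, orient_rotate, hx b c a h2 h3]; norm_num
    · exact absurd h2 hbc
    · -- c < b < a
      have v1 : b.val < a.val := h1
      have v2 : c.val < b.val := h2
      have ho : ocyc a.val b.val c.val = -1 := by unfold ocyc; split_ifs <;> omega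
      rw [ho, orient_swap13, hx c b a h2 h1]; norm_num

/-- If the `xᵢ` are distinct and positively cyclically ordered according to their numbering,
then `Θ` simplifies to a sum of 20 orientation values of the `yᵢ`; in particular `|Θ| ≤ 2/3`
on such tuples. Here `τ = (0 1 2 3 4)`, i.e. `τᵏ(m) = k + m` in `Fin 5`. -/
theorem theta_formula_of_posOrdered (x y : Fin 5 → Circle)
    (hx : PosCyclicallyOrdered x) :
    Theta (fun i => (x i, y i)) = (1 / 30) * ∑ k : Fin 5,
        (orient (y (k + 2)) (y (k + 3)) (y (k + 4))
          + orient (y k) (y (k + 1)) (y (k + 2))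
          - orient (y k) (y (k + 1)) (y (k + 3))
          + orient (y k) (y (k + 1)) (y (k + 4))) ∧
      |Theta (fun i => (x i, y i))| ≤ 2 / 3 := by
  have step1 : Theta (fun i => (x i, y i)) = (1 / 120) * ∑ σ : Equiv.Perm (Fin 5),
      ((cInt σ : ℤ) : ℝ) * orient (y (σ 2)) (y (σ 3)) (y (σ 4)) := by
    unfold Theta
    congr 1
    refine Finset.sum_congr rfl fun σ _ => ?_
    show ((Equiv.Perm.sign σ : ℤ) : ℝ) *
        (orient (x (σ 0)) (x (σ 1)) (x (σ 2)) * orient (y (σ 2)) (y (σ 3)) (y (σ 4))) = _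
    rw [orientx_eq x hx]
    push_cast [cInt]
    ring
  have step2 : (∑ σ : Equiv.Perm (Fin 5),
        ((cInt σ : ℤ) : ℝ) * orient (y (σ 2)) (y (σ 3)) (y (σ 4)))
      = ∑ p : Fin 5 × Fin 5 × Fin 5,
          ((tbl p.1 p.2.1 p.2.2 : ℤ) : ℝ) * orient (y p.1) (y p.2.1) (y p.2.2) := by
    calc (∑ σ : Equiv.Perm (Fin 5), ((cInt σ : ℤ) : ℝ) * orient (y (σ 2)) (y (σ 3)) (y (σ 4)))
        = ∑ σ : Equiv.Perm (Fin 5), ∑ p : Fin 5 × Fin 5 × Fin 5,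
            (if (σ 2, σ 3, σ 4) = p then
              ((cInt σ : ℤ) : ℝ) * orient (y p.1) (y p.2.1) (y p.2.2) else 0) := by
          refine Finset.sum_congr rfl fun σ _ => ?_
          rw [Finset.sum_ite_eq]
          simp
      _ = ∑ p : Fin 5 × Fin 5 × Fin 5, ∑ σ : Equiv.Perm (Fin 5),
            (if (σ 2, σ 3, σ 4) = p then
              ((cInt σ : ℤ) : ℝ) * orient (y p.1) (y p.2.1) (y p.2.2) else 0) :=
          Finset.sum_comm
      _ = ∑ p : Fin 5 × Fin 5 × Fin 5,
            ((coeffInt p : ℤ) : ℝ) * orient (y p.1) (y p.2.1) (y p.2.2) := by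
          refine Finset.sum_congr rfl fun p _ => ?_
          simp only [coeffInt]
          push_cast
          rw [Finset.sum_mul]
          refine Finset.sum_congr rfl fun σ _ => ?_
          split_ifs <;> simp
      _ = ∑ p : Fin 5 × Fin 5 × Fin 5,
            ((tbl p.1 p.2.1 p.2.2 : ℤ) : ℝ) * orient (y p.1) (y p.2.1) (y p.2.2) := by
          simp only [coeff_eval]
  have key : Theta (fun i => (x i, y i)) = (1 / 30) * ∑ k : Fin 5,
      (orient (y (k + 2)) (y (k + 3)) (y (k + 4))
        + orient (y k) (y (k + 1)) (y (k + 2))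
        - orient (y k) (y (k + 1)) (y (k + 3))
        + orient (y k) (y (k + 1)) (y (k + 4))) := by
    rw [step1, step2]
    simp only [Fintype.sum_prod_type, Fin.sum_univ_five]
    simp only [tbl, Matrix.cons_val_zero, Matrix.cons_val_one, Matrix.cons_val_two,
      Matrix.cons_val_three, Matrix.cons_val_four, Matrix.head_cons, Matrix.tail_cons]
    push_cast
    have hr012a : orient (y 1) (y 2) (y 0) = orient (y 0) (y 1) (y 2) := (orient_rotate (y 0) (y 1) (y 2)).symm
    have hr012b : orient (y 2) (y 0) (y 1) = orient (y 0) (y 1) (y 2) := orient_rotate (y 2) (y 0) (y 1)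
    have hr012c : orient (y 0) (y 2) (y 1) = -orient (y 0) (y 1) (y 2) := orient_swap23 (y 0) (y 2) (y 1)
    have hr012d : orient (y 1) (y 0) (y 2) = -orient (y 0) (y 1) (y 2) := orient_swap12 (y 1) (y 0) (y 2)
    have hr012e : orient (y 2) (y 1) (y 0) = -orient (y 0) (y 1) (y 2) := orient_swap13 (y 2) (y 1) (y 0)
    have hr013a : orient (y 1) (y 3) (y 0) = orient (y 0) (y 1) (y 3) := (orient_rotate (y 0) (y 1) (y 3)).symm
    have hr013b : orient (y 3) (y 0) (y 1) = orient (y 0) (y 1) (y 3) := orient_rotate (y 3) (y 0) (y 1)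
    have hr013c : orient (y 0) (y 3) (y 1) = -orient (y 0) (y 1) (y 3) := orient_swap23 (y 0) (y 3) (y 1)
    have hr013d : orient (y 1) (y 0) (y 3) = -orient (y 0) (y 1) (y 3) := orient_swap12 (y 1) (y 0) (y 3)
    have hr013e : orient (y 3) (y 1) (y 0) = -orient (y 0) (y 1) (y 3) := orient_swap13 (y 3) (y 1) (y 0)
    have hr014a : orient (y 1) (y 4) (y 0) = orient (y 0) (y 1) (y 4) := (orient_rotate (y 0) (y 1) (y 4)).symm
    have hr014b : orient (y 4) (y 0) (y 1) = orient (y 0) (y 1) (y 4) := orient_rotate (y 4) (y 0) (y 1)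
    have hr014c : orient (y 0) (y 4) (y 1) = -orient (y 0) (y 1) (y 4) := orient_swap23 (y 0) (y 4) (y 1)
    have hr014d : orient (y 1) (y 0) (y 4) = -orient (y 0) (y 1) (y 4) := orient_swap12 (y 1) (y 0) (y 4)
    have hr014e : orient (y 4) (y 1) (y 0) = -orient (y 0) (y 1) (y 4) := orient_swap13 (y 4) (y 1) (y 0)
    have hr023a : orient (y 2) (y 3) (y 0) = orient (y 0) (y 2) (y 3) := (orient_rotate (y 0) (y 2) (y 3)).symm
    have hr023b : orient (y 3) (y 0) (y 2) = orient (y 0) (y 2) (y 3) := orient_rotate (y 3) (y 0) (y 2)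
    have hr023c : orient (y 0) (y 3) (y 2) = -orient (y 0) (y 2) (y 3) := orient_swap23 (y 0) (y 3) (y 2)
    have hr023d : orient (y 2) (y 0) (y 3) = -orient (y 0) (y 2) (y 3) := orient_swap12 (y 2) (y 0) (y 3)
    have hr023e : orient (y 3) (y 2) (y 0) = -orient (y 0) (y 2) (y 3) := orient_swap13 (y 3) (y 2) (y 0)
    have hr024a : orient (y 2) (y 4) (y 0) = orient (y 0) (y 2) (y 4) := (orient_rotate (y 0) (y 2) (y 4)).symm
    have hr024b : orient (y 4) (y 0) (y 2) = orient (y 0) (y 2) (y 4) := orient_rotate (y 4) (y 0) (y 2)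
    have hr024c : orient (y 0) (y 4) (y 2) = -orient (y 0) (y 2) (y 4) := orient_swap23 (y 0) (y 4) (y 2)
    have hr024d : orient (y 2) (y 0) (y 4) = -orient (y 0) (y 2) (y 4) := orient_swap12 (y 2) (y 0) (y 4)
    have hr024e : orient (y 4) (y 2) (y 0) = -orient (y 0) (y 2) (y 4) := orient_swap13 (y 4) (y 2) (y 0)
    have hr034a : orient (y 3) (y 4) (y 0) = orient (y 0) (y 3) (y 4) := (orient_rotate (y 0) (y 3) (y 4)).symm
    have hr034b : orient (y 4) (y 0) (y 3) = orient (y 0) (y 3) (y 4) := orient_rotate (y 4) (y 0) (y 3)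
    have hr034c : orient (y 0) (y 4) (y 3) = -orient (y 0) (y 3) (y 4) := orient_swap23 (y 0) (y 4) (y 3)
    have hr034d : orient (y 3) (y 0) (y 4) = -orient (y 0) (y 3) (y 4) := orient_swap12 (y 3) (y 0) (y 4)
    have hr034e : orient (y 4) (y 3) (y 0) = -orient (y 0) (y 3) (y 4) := orient_swap13 (y 4) (y 3) (y 0)
    have hr123a : orient (y 2) (y 3) (y 1) = orient (y 1) (y 2) (y 3) := (orient_rotate (y 1) (y 2) (y 3)).symm
    have hr123b : orient (y 3) (y 1) (y 2) = orient (y 1) (y 2) (y 3) := orient_rotate (y 3) (y 1) (y 2)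
    have hr123c : orient (y 1) (y 3) (y 2) = -orient (y 1) (y 2) (y 3) := orient_swap23 (y 1) (y 3) (y 2)
    have hr123d : orient (y 2) (y 1) (y 3) = -orient (y 1) (y 2) (y 3) := orient_swap12 (y 2) (y 1) (y 3)
    have hr123e : orient (y 3) (y 2) (y 1) = -orient (y 1) (y 2) (y 3) := orient_swap13 (y 3) (y 2) (y 1)
    have hr124a : orient (y 2) (y 4) (y 1) = orient (y 1) (y 2) (y 4) := (orient_rotate (y 1) (y 2) (y 4)).symm
    have hr124b : orient (y 4) (y 1) (y 2) = orient (y 1) (y 2) (y 4) := orient_rotate (y 4) (y 1) (y 2)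
    have hr124c : orient (y 1) (y 4) (y 2) = -orient (y 1) (y 2) (y 4) := orient_swap23 (y 1) (y 4) (y 2)
    have hr124d : orient (y 2) (y 1) (y 4) = -orient (y 1) (y 2) (y 4) := orient_swap12 (y 2) (y 1) (y 4)
    have hr124e : orient (y 4) (y 2) (y 1) = -orient (y 1) (y 2) (y 4) := orient_swap13 (y 4) (y 2) (y 1)
    have hr134a : orient (y 3) (y 4) (y 1) = orient (y 1) (y 3) (y 4) := (orient_rotate (y 1) (y 3) (y 4)).symm
    have hr134b : orient (y 4) (y 1) (y 3) = orient (y 1) (y 3) (y 4) := orient_rotate (y 4) (y 1) (y 3)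
    have hr134c : orient (y 1) (y 4) (y 3) = -orient (y 1) (y 3) (y 4) := orient_swap23 (y 1) (y 4) (y 3)
    have hr134d : orient (y 3) (y 1) (y 4) = -orient (y 1) (y 3) (y 4) := orient_swap12 (y 3) (y 1) (y 4)
    have hr134e : orient (y 4) (y 3) (y 1) = -orient (y 1) (y 3) (y 4) := orient_swap13 (y 4) (y 3) (y 1)
    have hr234a : orient (y 3) (y 4) (y 2) = orient (y 2) (y 3) (y 4) := (orient_rotate (y 2) (y 3) (y 4)).symm
    have hr234b : orient (y 4) (y 2) (y 3) = orient (y 2) (y 3) (y 4) := orient_rotate (y 4) (y 2) (y 3)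
    have hr234c : orient (y 2) (y 4) (y 3) = -orient (y 2) (y 3) (y 4) := orient_swap23 (y 2) (y 4) (y 3)
    have hr234d : orient (y 3) (y 2) (y 4) = -orient (y 2) (y 3) (y 4) := orient_swap12 (y 3) (y 2) (y 4)
    have hr234e : orient (y 4) (y 3) (y 2) = -orient (y 2) (y 3) (y 4) := orient_swap13 (y 4) (y 3) (y 2)
    simp only [hr012a, hr012b, hr012c, hr012d, hr012e, hr013a, hr013b, hr013c, hr013d, hr013e, hr014a, hr014b, hr014c, hr014d, hr014e, hr023a, hr023b, hr023c, hr023d, hr023e, hr024a, hr024b, hr024c, hr024d, hr024e, hr034a, hr034b, hr034c, hr034d, hr034e, hr123a, hr123b, hr123c, hr123d, hr123e, hr124a, hr124b, hr124c, hr124d, hr124e, hr134a, hr134b, hr134c, hr134d, hr134e, hr234a, hr234b, hr234c, hr234d, hr234e]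
    ring
  refine ⟨key, ?_⟩
  rw [key]
  have hb : ∀ k : Fin 5, |orient (y (k + 2)) (y (k + 3)) (y (k + 4))
      + orient (y k) (y (k + 1)) (y (k + 2))
      - orient (y k) (y (k + 1)) (y (k + 3))
      + orient (y k) (y (k + 1)) (y (k + 4))| ≤ 4 := by
    intro k
    have h1 := abs_le.mp (orient_abs_le (y (k + 2)) (y (k + 3)) (y (k + 4)))
    have h2 := abs_le.mp (orient_abs_le (y k) (y (k + 1)) (y (k + 2)))
    have h3 := abs_le.mp (orient_abs_le (y k) (y (k + 1)) (y (k + 3)))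
    have h4 := abs_le.mp (orient_abs_le (y k) (y (k + 1)) (y (k + 4)))
    rw [abs_le]
    constructor <;> linarith [h1.1, h1.2, h2.1, h2.2, h3.1, h3.2, h4.1, h4.2]
  have hS : |∑ k : Fin 5, (orient (y (k + 2)) (y (k + 3)) (y (k + 4))
      + orient (y k) (y (k + 1)) (y (k + 2))
      - orient (y k) (y (k + 1)) (y (k + 3))
      + orient (y k) (y (k + 1)) (y (k + 4)))| ≤ 20 := by
    refine (Finset.abs_sum_le_sum_abs _ _).trans ?_
    calc (∑ k : Fin 5, |orient (y (k + 2)) (y (k + 3)) (y (k + 4))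
          + orient (y k) (y (k + 1)) (y (k + 2))
          - orient (y k) (y (k + 1)) (y (k + 3))
          + orient (y k) (y (k + 1)) (y (k + 4))|)
        ≤ ∑ _k : Fin 5, (4 : ℝ) := Finset.sum_le_sum fun k _ => hb k
      _ = 20 := by simp; norm_num
  rw [abs_mul]
  have : |(1 / 30 : ℝ)| = 1 / 30 := by norm_num
  rw [this]
  linarith
end

section
/- Θ = Alt(Or₁ ∪ Or₂) is a cocycle: for every 6-tuple (z₀,…,z₅) in (S¹×S¹)⁶, Σ_{i=0}^{5} (−1)ⁱ Θ(z₀,…,ẑᵢ,…,z₅) = 0, where ẑᵢ means that the i-th coordinate is omitted. -/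
open scoped BigOperators

/-!
`Or` is the coboundary of the 1-cochain `(a, b) ↦ sign (arg b - arg a)`, because
`sin x + sin y - sin (x + y) = 4 sin (x/2) sin (y/2) sin ((x+y)/2)` and the half angles stay in
`(-π, π)`. So `Or` is a cocycle, and the cup product `Or₁ ∪ Or₂` is a cocycle by the Leibniz rule.
Alternation commutes with the coboundary up to the factor `n + 1`: restricted to the `i`-th face,
a permutation of `Fin (n + 1)` is, up to the sign `(-1) ^ i`, a face map `p.succAbove` followed by a
permutation of `Fin n`, and `(p, σ)` runs over all such pairs exactly once.
-/

open Equiv Equiv.Perm Finset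

namespace Fin

variable {n : ℕ}

def insertPerm (p : Fin (n + 1)) (σ : Perm (Fin n)) : Perm (Fin (n + 1)) :=
  p.cycleRange⁻¹ * decomposeFin.symm (0, σ)

@[simp]
theorem insertPerm_zero (p : Fin (n + 1)) (σ : Perm (Fin n)) : insertPerm p σ 0 = p := by
  simp [insertPerm, Perm.inv_def]

@[simp]
theorem insertPerm_succ (p : Fin (n + 1)) (σ : Perm (Fin n)) (j : Fin n) :
    insertPerm p σ j.succ = p.succAbove (σ j) := by
  simp [insertPerm, Perm.inv_def]

theorem sign_insertPerm (p : Fin (n + 1)) (σ : Perm (Fin n)) :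
    sign (insertPerm p σ) = (-1) ^ (p : ℕ) * sign σ := by
  simp [insertPerm, sign_cycleRange]

theorem insertPerm_injective :
    Function.Injective fun x : Fin (n + 1) × Perm (Fin n) => insertPerm x.1 x.2 := by
  rintro ⟨p, σ⟩ ⟨q, ρ⟩ h
  have hpq : p = q := by simpa using congr($h 0)
  subst hpq
  refine Prod.ext rfl (Equiv.ext fun j => ?_)
  simpa using congr($h j.succ)

theorem insertPerm_bijective :
    Function.Bijective fun x : Fin (n + 1) × Perm (Fin n) => insertPerm x.1 x.2 :=
  (Fintype.bijective_iff_injective_and_card _).mpr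
    ⟨insertPerm_injective, by simp [Fintype.card_perm, Nat.factorial_succ]⟩

end Fin

section Cochains

variable {α β R : Type*} [CommRing R] {n : ℕ}

def coboundary (f : (Fin n → α) → R) (w : Fin (n + 1) → α) : R :=
  ∑ i : Fin (n + 1), (-1) ^ (i : ℕ) * f (w ∘ i.succAbove)

def alternatization (f : (Fin n → α) → R) (z : Fin n → α) : R :=
  ∑ σ : Perm (Fin n), ((sign σ : ℤ) : R) * f (z ∘ σ)

theorem sum_sign_mul_comp_succAbove (F : (Fin n → Fin (n + 1)) → R) (i : Fin (n + 1)) :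
    ∑ τ : Perm (Fin (n + 1)), ((sign τ : ℤ) : R) * F (τ ∘ i.succAbove) =
      (-1) ^ (i : ℕ) * ∑ τ : Perm (Fin (n + 1)), ((sign τ : ℤ) : R) * F (τ ∘ Fin.succ) := by
  rw [mul_sum, ← Equiv.sum_comp (Equiv.mulRight i.cycleRange)]
  refine sum_congr rfl fun τ _ => ?_
  have : (τ * i.cycleRange) ∘ i.succAbove = τ ∘ Fin.succ := by
    ext j; simp
  rw [coe_mulRight, this, Perm.sign_mul, Fin.sign_cycleRange]
  push_cast
  ring

theorem sum_sign_mul_comp_succ (F : (Fin n → Fin (n + 1)) → R) :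
    ∑ τ : Perm (Fin (n + 1)), ((sign τ : ℤ) : R) * F (τ ∘ Fin.succ) =
      ∑ p : Fin (n + 1), (-1) ^ (p : ℕ) *
        ∑ σ : Perm (Fin n), ((sign σ : ℤ) : R) * F (p.succAbove ∘ σ) := by
  rw [← Fin.insertPerm_bijective.sum_comp, Fintype.sum_prod_type]
  refine sum_congr rfl fun p _ => ?_
  rw [mul_sum]
  refine sum_congr rfl fun σ _ => ?_
  have : Fin.insertPerm p σ ∘ Fin.succ = p.succAbove ∘ σ := by
    ext j; simp
  rw [this, Fin.sign_insertPerm]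
  push_cast
  ring

theorem alternatization_coboundary (f : (Fin n → α) → R) (w : Fin (n + 1) → α) :
    alternatization (coboundary f) w = (n + 1) • coboundary (alternatization f) w := by
  have hfaces : ∀ i : Fin (n + 1),
      ∑ τ : Perm (Fin (n + 1)), ((sign τ : ℤ) : R) * f (w ∘ τ ∘ i.succAbove) =
        (-1) ^ (i : ℕ) * coboundary (alternatization f) w := fun i =>
    (sum_sign_mul_comp_succAbove (fun g => f (w ∘ g)) i).trans
      (congrArg _ (sum_sign_mul_comp_succ fun g => f (w ∘ g)))
  calc alternatization (coboundary f) w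
      = ∑ i : Fin (n + 1), (-1) ^ (i : ℕ) *
          ∑ τ : Perm (Fin (n + 1)), ((sign τ : ℤ) : R) * f (w ∘ τ ∘ i.succAbove) := by
        simp only [alternatization, coboundary, mul_sum, Function.comp_assoc]
        rw [sum_comm]
        exact sum_congr rfl fun i _ => sum_congr rfl fun τ _ => by ring
    _ = ∑ _i : Fin (n + 1), coboundary (alternatization f) w := by
        refine sum_congr rfl fun i _ => ?_
        rw [hfaces, ← mul_assoc, ← mul_pow, neg_one_mul, neg_neg, one_pow, one_mul]
    _ = (n + 1) • coboundary (alternatization f) w := by simp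

theorem coboundary_alternatization_eq_zero [IsAddTorsionFree R] {f : (Fin n → α) → R}
    (hf : coboundary f = 0) : coboundary (alternatization f) = 0 := by
  ext w
  have h := alternatization_coboundary f w
  simp only [hf, alternatization, Pi.zero_apply, mul_zero, sum_const_zero] at h
  exact (nsmul_eq_zero_iff_right n.succ_ne_zero).mp h.symm

def cupProduct (a : α → α → α → R) (b : β → β → β → R) (z : Fin 5 → α × β) : R :=
  a (z 0).1 (z 1).1 (z 2).1 * b (z 2).2 (z 3).2 (z 4).2

theorem coboundary_cupProduct {a : α → α → α → R} {b : β → β → β → R}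
    (ha : ∀ x₀ x₁ x₂ x₃, a x₁ x₂ x₃ - a x₀ x₂ x₃ + a x₀ x₁ x₃ - a x₀ x₁ x₂ = 0)
    (hb : ∀ y₀ y₁ y₂ y₃, b y₁ y₂ y₃ - b y₀ y₂ y₃ + b y₀ y₁ y₃ - b y₀ y₁ y₂ = 0) :
    coboundary (cupProduct a b) = 0 := by
  ext w
  have hfront := ha (w 0).1 (w 1).1 (w 2).1 (w 3).1
  have hback := hb (w 2).2 (w 3).2 (w 4).2 (w 5).2
  simp only [coboundary, cupProduct, Nat.reduceAdd, Fin.sum_univ_six, Function.comp_apply,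
    Pi.zero_apply, Fin.succAbove, Fin.reduceCastSucc, Fin.reduceSucc, Fin.reduceLT, ↓reduceIte,
    Fin.isValue, Fin.coe_ofNat_eq_mod, Nat.reduceMod]
  -- Faces 0-2 share the back triple (3, 4, 5), faces 3-5 the front triple (0, 1, 2).
  linear_combination b (w 3).2 (w 4).2 (w 5).2 * hfront + a (w 0).1 (w 1).1 (w 2).1 * hback

end Cochains

open Complex (arg)

namespace Real

theorem sign_mul (x y : ℝ) : sign (x * y) = sign x * sign y := by
  rcases lt_trichotomy x 0 with hx | rfl | hx <;> rcases lt_trichotomy y 0 with hy | rfl | hy <;>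
    simp [sign_of_neg, sign_of_pos, mul_pos_of_neg_of_neg, mul_neg_of_neg_of_pos,
      mul_neg_of_pos_of_neg, *]

theorem sign_mul_sign_mul_sign_add (x y : ℝ) :
    sign x * sign y * sign (x + y) = sign x + sign y - sign (x + y) := by
  simp only [sign]
  split_ifs <;> (try norm_num) <;> linarith

theorem sign_sin_of_abs_lt_pi {x : ℝ} (hx : |x| < π) : sign (sin x) = sign x := by
  obtain ⟨hx₁, hx₂⟩ := abs_lt.mp hx
  rcases lt_trichotomy x 0 with h | rfl | h
  · rw [sign_of_neg h, sign_of_neg (sin_neg_of_neg_of_neg_pi_lt h hx₁)]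
  · simp
  · rw [sign_of_pos h, sign_of_pos (sin_pos_of_pos_of_lt_pi h hx₂)]

theorem sin_add_sin_sub_sin_add (x y : ℝ) :
    sin x + sin y - sin (x + y) = 4 * sin (x / 2) * sin (y / 2) * sin ((x + y) / 2) := by
  obtain ⟨u, rfl⟩ : ∃ u, x = 2 * u := ⟨x / 2, by ring⟩
  obtain ⟨v, rfl⟩ : ∃ v, y = 2 * v := ⟨y / 2, by ring⟩
  rw [← mul_add, sin_two_mul, sin_two_mul, sin_two_mul, sin_add, cos_add]
  simp only [mul_div_cancel_left₀ _ (two_ne_zero' ℝ), sin_add]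
  linear_combination (-2 * sin u * cos u) * sin_sq_add_cos_sq v +
    (-2 * sin v * cos v) * sin_sq_add_cos_sq u

theorem sign_sin_add_sin_sub_sin_add {x y : ℝ} (hx : |x| < 2 * π) (hy : |y| < 2 * π)
    (hxy : |x + y| < 2 * π) :
    sign (sin x + sin y - sin (x + y)) = sign x + sign y - sign (x + y) := by
  have half {t : ℝ} (ht : |t| < 2 * π) : sign (sin (t / 2)) = sign t := by
    rw [sign_sin_of_abs_lt_pi (by rw [abs_div, abs_two]; linarith), div_eq_mul_inv,
      sign_mul, sign_of_pos (by norm_num : (0 : ℝ) < 2⁻¹), mul_one]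
  rw [sin_add_sin_sub_sin_add, sign_mul, sign_mul, sign_mul, sign_of_pos four_pos, one_mul,
    half hx, half hy, half hxy, sign_mul_sign_mul_sign_add]

end Real

theorem Circle.re_eq_cos_arg (z : Circle) : (z : ℂ).re = Real.cos (arg z) := by
  rw [Complex.cos_arg z.coe_ne_zero, z.norm_coe, div_one]

theorem Circle.im_eq_sin_arg (z : Circle) : (z : ℂ).im = Real.sin (arg z) := by
  rw [Complex.sin_arg, z.norm_coe, div_one]

theorem orient_eq_sign_arg_sub (a b c : Circle) :
    orient a b c =
      Real.sign (arg b - arg a) + Real.sign (arg c - arg b) - Real.sign (arg c - arg a) := by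
  have him : ((starRingEnd ℂ) ((b : ℂ) - a) * ((c : ℂ) - a)).im =
      Real.sin (arg b - arg a) + Real.sin (arg c - arg b) -
        Real.sin ((arg b - arg a) + (arg c - arg b)) := by
    simp only [Complex.mul_im, Complex.conj_re, Complex.conj_im, Complex.sub_re, Complex.sub_im,
      Circle.re_eq_cos_arg, Circle.im_eq_sin_arg, sub_add_sub_cancel', Real.sin_sub]
    ring
  have hπ := Real.pi_pos
  have bounds (z : Circle) := And.intro (Complex.neg_pi_lt_arg z) (Complex.arg_le_pi z)
  obtain ⟨ha₁, ha₂⟩ := bounds a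
  obtain ⟨hb₁, hb₂⟩ := bounds b
  obtain ⟨hc₁, hc₂⟩ := bounds c
  rw [orient, him, Real.sign_sin_add_sin_sub_sin_add, sub_add_sub_cancel'] <;>
    rw [abs_lt] <;> constructor <;> linarith

theorem orient_cocycle (a b c d : Circle) :
    orient b c d - orient a c d + orient a b d - orient a b c = 0 := by
  simp only [orient_eq_sign_arg_sub]
  ring

/-- `Θ` is a simplicial cocycle: its coboundary vanishes on every 6-tuple. -/
theorem theta_is_cocycle (w : Fin 6 → Circle × Circle) :
    ∑ i : Fin 6, (-1 : ℝ) ^ (i : ℕ) * Theta (fun j => w (i.succAbove j)) = 0 := by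
  have hTheta (z : Fin 5 → Circle × Circle) :
      Theta z = 1 / 120 * alternatization (cupProduct orient orient) z := rfl
  have hcocycle : coboundary (alternatization (cupProduct orient orient)) w = 0 :=
    congrFun (coboundary_alternatization_eq_zero
      (coboundary_cupProduct orient_cocycle orient_cocycle)) w
  calc ∑ i : Fin 6, (-1 : ℝ) ^ (i : ℕ) * Theta (fun j => w (i.succAbove j))
      = 1 / 120 * coboundary (alternatization (cupProduct orient orient)) w := by
        simp only [coboundary, hTheta, mul_sum]
        exact sum_congr rfl fun i _ => mul_left_comm _ _ _
    _ = 0 := by rw [hcocycle, mul_zero]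
end

section
/- Θ = Alt(Or₁ ∪ Or₂) vanishes on degenerate tuples in either factor: if ((x₀,y₀),…,(x₄,y₄)) ∈ (S¹×S¹)⁵ satisfies #{x₀,…,x₄} ≤ 2 or #{y₀,…,y₄} ≤ 2, then Θ((x₀,y₀),…,(x₄,y₄)) = 0. -/
open scoped BigOperators

open Classical in
/-- Number of distinct first coordinates of a tuple in `S¹ × S¹`. -/
noncomputable def ncard₁ {n : ℕ} (z : Fin n → Circle × Circle) : ℕ :=
  (Finset.univ.image fun i => (z i).1).card

open Classical in
/-- Number of distinct second coordinates of a tuple in `S¹ × S¹`. -/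
noncomputable def ncard₂ {n : ℕ} (z : Fin n → Circle × Circle) : ℕ :=
  (Finset.univ.image fun i => (z i).2).card

lemma orient_degenerate {a b c : Circle} (h : a = b ∨ a = c ∨ b = c) :
    orient a b c = 0 := by
  rcases h with rfl | rfl | rfl
  · simp [orient]
  · simp [orient]
  · simp [orient, Complex.mul_im]; ring

open Classical in
lemma pair_of_card_le_two {α : Type*} {S : Finset α} (hS : S.card ≤ 2)
    {a b c : α} (ha : a ∈ S) (hb : b ∈ S) (hc : c ∈ S) :
    a = b ∨ a = c ∨ b = c := by
  by_contra hcon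
  push_neg at hcon
  obtain ⟨h1, h2, h3⟩ := hcon
  have hsub : ({a, b, c} : Finset α) ⊆ S := by
    intro x hx
    simp only [Finset.mem_insert, Finset.mem_singleton] at hx
    rcases hx with rfl | rfl | rfl <;> assumption
  have hcard : ({a, b, c} : Finset α).card = 3 := by
    rw [Finset.card_insert_of_notMem (by simp [h1, h2]),
      Finset.card_insert_of_notMem (by simp [h3]), Finset.card_singleton]
  have := Finset.card_le_card hsub
  omega

/-- `Θ` vanishes on 5-tuples which are degenerate in either factor: tuples with at most
two distinct first coordinates or at most two distinct second coordinates. -/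
theorem theta_vanishes_on_degenerate (z : Fin 5 → Circle × Circle)
    (h : ncard₁ z ≤ 2 ∨ ncard₂ z ≤ 2) : Theta z = 0 := by
  classical
  unfold Theta
  rw [Finset.sum_eq_zero, mul_zero]
  intro σ _
  rcases h with h | h
  · have := pair_of_card_le_two h
      (Finset.mem_image_of_mem (fun i => (z i).1) (Finset.mem_univ (σ 0)))
      (Finset.mem_image_of_mem (fun i => (z i).1) (Finset.mem_univ (σ 1)))
      (Finset.mem_image_of_mem (fun i => (z i).1) (Finset.mem_univ (σ 2)))
    rw [orient_degenerate this, zero_mul, mul_zero]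
  · have := pair_of_card_le_two h
      (Finset.mem_image_of_mem (fun i => (z i).2) (Finset.mem_univ (σ 2)))
      (Finset.mem_image_of_mem (fun i => (z i).2) (Finset.mem_univ (σ 3)))
      (Finset.mem_image_of_mem (fun i => (z i).2) (Finset.mem_univ (σ 4)))
    rw [orient_degenerate this, mul_zero, mul_zero]
end

section
/- For 0 ≤ q ≤ 2, every alternating function f : (S¹×S¹)^{q+1} → ℝ that is invariant under the twisted (orientation-sign) action of H = Isom(ℍ²×ℍ²) is identically zero. In particular, the twisted continuous bounded cohomology H^q_{c,b}(H, ℝ̃) vanishes for 0 ≤ q ≤ 2. -/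
open scoped BigOperators

/-- An isometry of the hyperbolic plane in the Poincaré disk model: the Möbius
transformation `z ↦ (a z + b)/(b̄ z + ā)` with `|a|² - |b|² = 1` (orientation
preserving when `pres = true`), precomposed with complex conjugation when
`pres = false` (orientation reversing). -/
structure DiskIsom where
  a : ℂ
  b : ℂ
  hnorm : Complex.normSq a - Complex.normSq b = 1
  pres : Bool

namespace DiskIsom

/-- The action on the (closed) disk and its boundary circle. -/
noncomputable def apply (g : DiskIsom) (z : ℂ) : ℂ :=
  (g.a * (if g.pres then z else (starRingEnd ℂ) z) + g.b) /
    ((starRingEnd ℂ) g.b * (if g.pres then z else (starRingEnd ℂ) z) + (starRingEnd ℂ) g.a)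

/-- The boundary action on the circle `S¹ = ∂ℍ²`. -/
noncomputable def applyS (g : DiskIsom) (x : Circle) : Circle :=
  Circle.exp (Complex.arg (g.apply (x : ℂ)))

/-- The orientation sign of an isometry. -/
noncomputable def sgn (g : DiskIsom) : ℝ := if g.pres then 1 else -1

/-- The inverse isometry. -/
noncomputable def inv (g : DiskIsom) : DiskIsom where
  a := if g.pres then (starRingEnd ℂ) g.a else g.a
  b := -g.b
  hnorm := by
    rcases g.pres with _ | _ <;>
      simp [Complex.normSq_conj, g.hnorm]
  pres := g.pres

end DiskIsom

/-- The geodesic of the hyperbolic plane (Poincaré disk model) with ideal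
endpoints `u, v ∈ S¹`, as a subset of the open unit disk in `ℂ`. -/
def geodesic (u v : Circle) : Set ℂ :=
  {z | ‖z‖ < 1 ∧
    (1 + Complex.normSq z) * ((u : ℂ) + (v : ℂ)) - 2 * z
      - 2 * (u : ℂ) * (v : ℂ) * (starRingEnd ℂ) z = 0}

/-- A cochain is alternating. -/
def Alternating {n : ℕ} {X : Type*} (f : (Fin n → X) → ℝ) : Prop :=
  ∀ (σ : Equiv.Perm (Fin n)) (z : Fin n → X),
    f (fun i => z (σ i)) = ((Equiv.Perm.sign σ : ℤ) : ℝ) * f z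

/-- Invariance of a cochain on `(S¹ × S¹)^n` under the twisted (orientation-sign)
action of `H = Isom(ℍ² × ℍ²)`, expressed on the generators: pairs of isometries of
`ℍ²` acting factorwise through their boundary action, and the factor swap. -/
def HInvariant {n : ℕ} (f : (Fin n → Circle × Circle) → ℝ) : Prop :=
  (∀ (g h : DiskIsom) (z : Fin n → Circle × Circle),
      f (fun i => (g.applyS (z i).1, h.applyS (z i).2)) = g.sgn * h.sgn * f z) ∧
  (∀ z : Fin n → Circle × Circle, f (fun i => ((z i).2, (z i).1)) = f z)

/-- The simplicial coboundary of a cochain. -/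
noncomputable def cobdry {n : ℕ} {X : Type*} (f : (Fin (n + 1) → X) → ℝ) :
    (Fin (n + 2) → X) → ℝ :=
  fun z => ∑ i : Fin (n + 2), (-1 : ℝ) ^ (i : ℕ) * f (fun j => z (i.succAbove j))

/-!
Invariance and alternation give `f z = sign σ · sgn g · sgn h · f z` whenever the isometry
`(g, h)` of `ℍ² × ℍ²` permutes the points of `z` by `σ`; it suffices to find such data with
sign product `-1`. If the coordinates of `z` in one factor take at most two values, a reflection
of that factor fixing them does it (`σ = 1`). Otherwise `q = 2` and in each factor `z₀` differs
from `z₁` and `z₂`; reflections of both factors fixing `z₀` and exchanging `z₁`, `z₂` realise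
the transposition `σ = (1 2)`, and again the three signs multiply to `-1`.
-/

lemma Circle.conj_eq_inv (x : Circle) : (starRingEnd ℂ) (x : ℂ) = (x : ℂ)⁻¹ := by
  rw [← Circle.coe_inv_eq_conj, Circle.coe_inv]

namespace DiskIsom

lemma denom_ne_zero (g : DiskIsom) {w : ℂ} (hw : ‖w‖ = 1) :
    (starRingEnd ℂ) g.b * w + (starRingEnd ℂ) g.a ≠ 0 := by
  intro h
  have hab : ‖g.a‖ = ‖g.b‖ := by
    simpa [hw] using congrArg (‖·‖) (eq_neg_of_add_eq_zero_right h)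
  have := g.hnorm
  rw [Complex.normSq_eq_norm_sq, Complex.normSq_eq_norm_sq, hab] at this
  norm_num at this

lemma applyS_eq_of_apply_eq {g : DiskIsom} {x y : Circle} (h : g.apply x = y) :
    g.applyS x = y := by
  rw [applyS, h, Circle.exp_arg]

noncomputable def id : DiskIsom := ⟨1, 0, by simp, true⟩

@[simp] lemma applyS_id (x : Circle) : id.applyS x = x :=
  applyS_eq_of_apply_eq (by simp [apply, id])

@[simp] lemma sgn_id : id.sgn = 1 := by simp [sgn, id]

lemma sgn_of_not_pres {g : DiskIsom} (hg : g.pres = false) : g.sgn = -1 := by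
  simp [sgn, hg]

/-- On the boundary an orientation-reversing `g` acts by the Möbius map
`x ↦ (b x + a) / (ā x + b̄)`, since `x̄ = x⁻¹` there. -/
lemma applyS_eq_of_not_pres {g : DiskIsom} (hg : g.pres = false) {x y : Circle}
    (h : g.b * x + g.a = y * ((starRingEnd ℂ) g.a * x + (starRingEnd ℂ) g.b)) :
    g.applyS x = y := by
  have hx := Circle.coe_ne_zero x
  have hw : ‖(x : ℂ)⁻¹‖ = 1 := by simp [Circle.norm_coe]
  have happly : g.apply x = y := by
    rw [apply, hg, if_neg Bool.false_ne_true, Circle.conj_eq_inv, div_eq_iff (g.denom_ne_zero hw)]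
    field_simp
    linear_combination h
  exact applyS_eq_of_apply_eq happly

/-- The reflection in the diameter through `u`. -/
lemma exists_reflection_fixes (u : Circle) :
    ∃ g : DiskIsom, g.pres = false ∧ g.applyS u = u := by
  refine ⟨⟨u, 0, by simp, false⟩, rfl, applyS_eq_of_not_pres rfl ?_⟩
  simp [Circle.conj_eq_inv]

/-- The Möbius map `x ↦ (b x + a) / (ā x + b̄)` is an involution iff `b` is imaginary; then
`x₀ ↦ x₀` and `x₁ ↦ x₂` determine `(a, b)` up to a real factor, and the polynomial identity
`B C + A² = E²` gives the normalisation `|a|² - |b|² = 1`. -/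
lemma exists_reflection_fixes_swaps {x₀ x₁ x₂ : Circle} (h₁ : x₀ ≠ x₁) (h₂ : x₀ ≠ x₂) :
    ∃ g : DiskIsom, g.pres = false ∧
      g.applyS x₀ = x₀ ∧ g.applyS x₁ = x₂ ∧ g.applyS x₂ = x₁ := by
  have hE : ((x₀ : ℂ) - x₁) * ((x₀ : ℂ) - x₂) ≠ 0 :=
    mul_ne_zero (sub_ne_zero.2 (mt Circle.ext h₁)) (sub_ne_zero.2 (mt Circle.ext h₂))
  set u : ℂ := ↑x₀
  set v : ℂ := ↑x₁
  set w : ℂ := ↑x₂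
  have hu : u ≠ 0 := Circle.coe_ne_zero x₀
  have hv : v ≠ 0 := Circle.coe_ne_zero x₁
  have hw : w ≠ 0 := Circle.coe_ne_zero x₂
  set E := (u - v) * (u - w)
  set A := u ^ 2 - v * w
  set B := 2 * u * v * w - u ^ 2 * (v + w)
  set C := 2 * u - v - w
  have hcA : (starRingEnd ℂ) (A / E) = -A / E := by
    simp only [A, E, map_div₀, map_sub, map_mul, map_pow, u, v, w, Circle.conj_eq_inv]
    field_simp
    ring
  have hcB : (starRingEnd ℂ) (B / E) = C / E := by
    simp only [B, C, E, map_div₀, map_sub, map_mul, map_pow, map_add, map_ofNat, u, v, w,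
      Circle.conj_eq_inv]
    field_simp
    ring
  have hnorm : Complex.normSq (B / E) - Complex.normSq (A / E) = 1 := by
    have key : B * C + A ^ 2 = E ^ 2 := by ring
    have : ((Complex.normSq (B / E) - Complex.normSq (A / E) : ℝ) : ℂ) = 1 := by
      push_cast
      rw [← Complex.mul_conj, ← Complex.mul_conj, hcA, hcB]
      field_simp
      linear_combination key
    exact_mod_cast this
  refine ⟨⟨B / E, A / E, hnorm, false⟩, rfl, ?_, ?_, ?_⟩ <;>
  · refine applyS_eq_of_not_pres rfl ?_
    simp only [hcA, hcB]
    field_simp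
    ring

lemma exists_reflection_fixes_pair (u v : Circle) :
    ∃ g : DiskIsom, g.pres = false ∧ g.applyS u = u ∧ g.applyS v = v := by
  by_cases huv : u = v
  · subst huv
    obtain ⟨g, hg, hu⟩ := exists_reflection_fixes u
    exact ⟨g, hg, hu, hu⟩
  · obtain ⟨g, hg, hu, hv, -⟩ := exists_reflection_fixes_swaps huv huv
    exact ⟨g, hg, hu, hv⟩

lemma exists_reflection_fixes_of_forall_eq_or_eq {ι : Type*} {x : ι → Circle} {u v : Circle}
    (hx : ∀ i, x i = u ∨ x i = v) :
    ∃ g : DiskIsom, g.pres = false ∧ ∀ i, g.applyS (x i) = x i := by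
  obtain ⟨g, hg, hu, hv⟩ := exists_reflection_fixes_pair u v
  refine ⟨g, hg, fun i => ?_⟩
  rcases hx i with h | h <;> rw [h] <;> assumption

end DiskIsom

lemma exists_forall_eq_or_eq_of_fin_three {α : Type*} {x : Fin 3 → α}
    (hx : x 0 = x 1 ∨ x 0 = x 2) : ∃ u v, ∀ i, x i = u ∨ x i = v := by
  rcases hx with h | h
  · exact ⟨x 0, x 2, by simp [Fin.forall_fin_succ, h]⟩
  · exact ⟨x 0, x 1, by simp [Fin.forall_fin_succ, h]⟩

section Cochains

variable {n : ℕ} {f : (Fin n → Circle × Circle) → ℝ}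

lemma eq_zero_of_map_eq_comp_perm (halt : Alternating f) (hinv : HInvariant f)
    {z : Fin n → Circle × Circle} (g h : DiskIsom) (σ : Equiv.Perm (Fin n))
    (hz : ∀ i, (g.applyS (z i).1, h.applyS (z i).2) = z (σ i))
    (hsign : g.sgn * h.sgn * (Equiv.Perm.sign σ : ℤ) = -1) : f z = 0 := by
  have hmap := hinv.1 g h z
  rw [funext hz, halt σ z] at hmap
  have hσ : ((Equiv.Perm.sign σ : ℤ) : ℝ) ^ 2 = 1 := by
    rcases Int.units_eq_one_or (Equiv.Perm.sign σ) with hs | hs <;> simp [hs]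
  linear_combination ((Equiv.Perm.sign σ : ℤ) * hmap + f z * hsign - f z * hσ) / 2

lemma eq_zero_of_fst_eq_or_eq (halt : Alternating f) (hinv : HInvariant f)
    {z : Fin n → Circle × Circle} {u v : Circle} (hz : ∀ i, (z i).1 = u ∨ (z i).1 = v) :
    f z = 0 := by
  obtain ⟨g, hg, hfix⟩ := DiskIsom.exists_reflection_fixes_of_forall_eq_or_eq hz
  exact eq_zero_of_map_eq_comp_perm halt hinv g .id 1 (by simp [hfix])
    (by simp [DiskIsom.sgn_of_not_pres hg])

lemma eq_zero_of_snd_eq_or_eq (halt : Alternating f) (hinv : HInvariant f)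
    {z : Fin n → Circle × Circle} {u v : Circle} (hz : ∀ i, (z i).2 = u ∨ (z i).2 = v) :
    f z = 0 := by
  obtain ⟨h, hh, hfix⟩ := DiskIsom.exists_reflection_fixes_of_forall_eq_or_eq hz
  exact eq_zero_of_map_eq_comp_perm halt hinv .id h 1 (by simp [hfix])
    (by simp [DiskIsom.sgn_of_not_pres hh])

end Cochains

/-- In generic position, reflecting both factors realises the transposition `(1 2)`,
so the three signs multiply to `-1`. -/
lemma eq_zero_of_fin_three_of_ne {f : (Fin 3 → Circle × Circle) → ℝ}
    (halt : Alternating f) (hinv : HInvariant f) {z : Fin 3 → Circle × Circle}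
    (h₁ : (z 0).1 ≠ (z 1).1) (h₂ : (z 0).1 ≠ (z 2).1)
    (h₃ : (z 0).2 ≠ (z 1).2) (h₄ : (z 0).2 ≠ (z 2).2) : f z = 0 := by
  obtain ⟨g, hg, hg₀, hg₁, hg₂⟩ := DiskIsom.exists_reflection_fixes_swaps h₁ h₂
  obtain ⟨h, hh, hh₀, hh₁, hh₂⟩ := DiskIsom.exists_reflection_fixes_swaps h₃ h₄
  refine eq_zero_of_map_eq_comp_perm halt hinv g h (Equiv.swap 1 2) ?_ ?_
  · intro i
    fin_cases i <;> simp [hg₀, hg₁, hg₂, hh₀, hh₁, hh₂, Equiv.swap_apply_of_ne_of_ne]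
  · simp [DiskIsom.sgn_of_not_pres hg, DiskIsom.sgn_of_not_pres hh]

/-- For `0 ≤ q ≤ 2`, every alternating `H`-invariant cochain on `(S¹ × S¹)^{q+1}`
is identically zero; in particular the twisted continuous bounded cohomology of
`H = Isom(ℍ² × ℍ²)` vanishes in degrees `≤ 2`. -/
theorem low_degree_cochains_vanish (q : ℕ) (hq : q ≤ 2)
    (f : (Fin (q + 1) → Circle × Circle) → ℝ)
    (halt : Alternating f) (hinv : HInvariant f)
    (z : Fin (q + 1) → Circle × Circle) : f z = 0 := by
  interval_cases q
  · exact eq_zero_of_fst_eq_or_eq halt hinv (u := (z 0).1) (v := (z 0).1)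
      (by simp [Fin.forall_fin_one])
  · exact eq_zero_of_fst_eq_or_eq halt hinv (u := (z 0).1) (v := (z 1).1)
      (by simp [Fin.forall_fin_two])
  · by_cases hfst : (z 0).1 = (z 1).1 ∨ (z 0).1 = (z 2).1
    · obtain ⟨u, v, huv⟩ := exists_forall_eq_or_eq_of_fin_three (x := fun i => (z i).1) hfst
      exact eq_zero_of_fst_eq_or_eq halt hinv huv
    by_cases hsnd : (z 0).2 = (z 1).2 ∨ (z 0).2 = (z 2).2
    · obtain ⟨u, v, huv⟩ := exists_forall_eq_or_eq_of_fin_three (x := fun i => (z i).2) hsnd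
      exact eq_zero_of_snd_eq_or_eq halt hinv huv
    push Not at hfst hsnd
    exact eq_zero_of_fin_three_of_ne halt hinv hfst.1 hfst.2 hsnd.1 hsnd.2
end

section
/- Suppose f₂ : (S¹×S¹)⁵ → ℝ is an alternating simplicial cocycle that vanishes on all 5-tuples z with n₁(z) + n₂(z) ≤ 7, where nᵢ(z) counts the distinct i-th coordinates of the entries of z. Then for any ((x₁,y₁),…,(x₄,y₄)) ∈ (S¹×S¹)⁴ and any choices of indices i ≠ j and i′ ≠ j′ in {1,2,3,4}: f₂((x_i,y_j),(x₁,y₁),…,(x₄,y₄)) = f₂((x_{i′},y_{j′}),(x₁,y₁),…,(x₄,y₄)). -/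
open scoped BigOperators

/-!
Apply the cocycle relation to the 6-tuple `(a, b, z₀, …, z₃)` with `a = (x_i, y_j)` and
`b = (x_{i'}, y_{j'})`. Its first two faces are `(b, z)` and `(a, z)`; the face omitting `z_k`
has at most three distinct first coordinates if `k ∉ {i, i'}`, and at most three distinct
second coordinates if `k ∉ {j, j'}`, so `f₂` vanishes on it whenever one of these holds.
This is the case for every `k` once moreover `i ≠ j'` and `i' ≠ j`, and then
`f₂(a, z) = f₂(b, z)`. In general one passes through an intermediate pair `(x_p, y_q)` with
`p ∉ {j, j'}` and `q ∉ {i, i', p}`.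
-/

open Finset

section Coboundary

variable {X : Type*} {m : ℕ}

theorem cobdry_cons_cons (f : (Fin (m + 2) → X) → ℝ) (a b : X) (z : Fin (m + 1) → X) :
    cobdry f (Fin.cons a (Fin.cons b z)) = f (Fin.cons b z) - f (Fin.cons a z) +
      ∑ k : Fin (m + 1), (-1 : ℝ) ^ (k : ℕ) *
        f (Fin.cons a (Fin.cons b (z ∘ k.succAbove))) := by
  have face₀ : (fun l => (Fin.cons a (Fin.cons b z) : Fin (m + 3) → X)
      ((0 : Fin (m + 3)).succAbove l)) = Fin.cons b z := by
    funext l; simp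
  have face₁ : (fun l => (Fin.cons a (Fin.cons b z) : Fin (m + 3) → X)
      ((0 : Fin (m + 2)).succ.succAbove l)) = Fin.cons a z := by
    funext l
    cases l using Fin.cases <;> simp
  have face (k : Fin (m + 1)) : (fun l => (Fin.cons a (Fin.cons b z) : Fin (m + 3) → X)
      (k.succ.succ.succAbove l)) = Fin.cons a (Fin.cons b (z ∘ k.succAbove)) := by
    funext l
    cases l using Fin.cases with
    | zero => simp
    | succ l => cases l using Fin.cases <;> simp [Fin.succ_succAbove_succ]
  rw [cobdry, Fin.sum_univ_succ, Fin.sum_univ_succ]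
  simp only [face₀, face₁, face, Fin.val_zero, Fin.val_succ, pow_succ, pow_zero,
    mul_neg_one, neg_neg]
  ring

theorem eq_of_cobdry_cons_cons_eq_zero (f : (Fin (m + 2) → X) → ℝ) (a b : X)
    (z : Fin (m + 1) → X) (hcocycle : cobdry f (Fin.cons a (Fin.cons b z)) = 0)
    (hfaces : ∀ k : Fin (m + 1),
      f (Fin.cons a (Fin.cons b (z ∘ k.succAbove))) = 0) :
    f (Fin.cons a z) = f (Fin.cons b z) := by
  rw [cobdry_cons_cons] at hcocycle
  simp only [hfaces, mul_zero, sum_const_zero, add_zero] at hcocycle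
  linarith

end Coboundary

section Counting

variable {α : Type*} [DecidableEq α] {n : ℕ}

theorem card_image_cons_cons_le (c : Fin (n + 1) → α) (p q k : Fin (n + 1)) :
    #(univ.image (Fin.cons (c p) (Fin.cons (c q) (c ∘ k.succAbove)) : Fin (n + 2) → α)) ≤
      n + 1 := by
  calc _ ≤ #(univ.image c) := card_le_card ?_
    _ ≤ n + 1 := card_image_le.trans (card_fin _).le
  intro x
  simp only [mem_image, mem_univ, true_and, forall_exists_index]
  rintro l rfl
  cases l using Fin.cases with
  | zero => exact ⟨p, rfl⟩
  | succ l => cases l using Fin.cases with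
    | zero => exact ⟨q, rfl⟩
    | succ l => exact ⟨_, rfl⟩

theorem card_image_cons_cons_le_of_ne (c : Fin (n + 1) → α) {p q k : Fin (n + 1)}
    (hp : p ≠ k) (hq : q ≠ k) :
    #(univ.image (Fin.cons (c p) (Fin.cons (c q) (c ∘ k.succAbove)) : Fin (n + 2) → α)) ≤
      n := by
  calc _ ≤ #((univ.erase k).image c) := card_le_card ?_
    _ ≤ n := card_image_le.trans (by simp)
  intro x
  simp only [mem_image, mem_univ, true_and, mem_erase, and_true, forall_exists_index]
  rintro l rfl
  cases l using Fin.cases with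
  | zero => exact ⟨p, hp, rfl⟩
  | succ l => cases l using Fin.cases with
    | zero => exact ⟨q, hq, rfl⟩
    | succ l => exact ⟨_, Fin.succAbove_ne k l, rfl⟩

end Counting

theorem ncard₁_add_ncard₂_cons_cons_le {n : ℕ} (z : Fin (n + 1) → Circle × Circle)
    {i j i' j' k : Fin (n + 1)} (hk : (i ≠ k ∧ i' ≠ k) ∨ (j ≠ k ∧ j' ≠ k)) :
    ncard₁ (Fin.cons ((z i).1, (z j).2) (Fin.cons ((z i').1, (z j').2) (z ∘ k.succAbove)) :
        Fin (n + 2) → Circle × Circle) +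
      ncard₂ (Fin.cons ((z i).1, (z j).2) (Fin.cons ((z i').1, (z j').2) (z ∘ k.succAbove)) :
        Fin (n + 2) → Circle × Circle) ≤ 2 * n + 1 := by
  classical
  simp only [ncard₁, ncard₂, ← Function.comp_def Prod.fst, ← Function.comp_def Prod.snd,
    Fin.comp_cons]
  rcases hk with ⟨hi, hi'⟩ | ⟨hj, hj'⟩
  · exact (add_le_add (card_image_cons_cons_le_of_ne (fun l => (z l).1) hi hi')
      (card_image_cons_cons_le (fun l => (z l).2) j j' k)).trans_eq (by ring)
  · exact (add_le_add (card_image_cons_cons_le (fun l => (z l).1) i i' k)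
      (card_image_cons_cons_le_of_ne (fun l => (z l).2) hj hj')).trans_eq (by ring)

theorem apply_cons_eq_of_ne {n : ℕ} (f : (Fin (n + 2) → Circle × Circle) → ℝ)
    (hcocycle : ∀ w, cobdry f w = 0)
    (hvanish : ∀ w, ncard₁ w + ncard₂ w ≤ 2 * n + 1 → f w = 0)
    (z : Fin (n + 1) → Circle × Circle) {i j i' j' : Fin (n + 1)}
    (hij : i ≠ j) (hi'j' : i' ≠ j') (hij' : i ≠ j') (hi'j : i' ≠ j) :
    f (Fin.cons ((z i).1, (z j).2) z) = f (Fin.cons ((z i').1, (z j').2) z) :=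
  eq_of_cobdry_cons_cons_eq_zero f _ _ z (hcocycle _) fun _ =>
    hvanish _ (ncard₁_add_ncard₂_cons_cons_le z (by grind))

theorem prepend_value_independent_general (f₂ : (Fin 5 → Circle × Circle) → ℝ)
    (hcocycle : ∀ w : Fin 6 → Circle × Circle, cobdry f₂ w = 0)
    (hvanish : ∀ z : Fin 5 → Circle × Circle, ncard₁ z + ncard₂ z ≤ 7 → f₂ z = 0)
    (z : Fin 4 → Circle × Circle) (i j i' j' : Fin 4)
    (hij : i ≠ j) (hij' : i' ≠ j') :
    f₂ (Fin.cons ((z i).1, (z j).2) z) = f₂ (Fin.cons ((z i').1, (z j').2) z) := by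
  obtain ⟨p, -, hp⟩ := exists_mem_notMem_of_card_lt_card (s := {j, j'}) (t := univ)
    (card_le_two.trans_lt (by simp))
  obtain ⟨q, -, hq⟩ := exists_mem_notMem_of_card_lt_card (s := {i, i', p}) (t := univ)
    (card_le_three.trans_lt (by simp))
  simp only [mem_insert, mem_singleton, not_or] at hp hq
  obtain ⟨hpj, hpj'⟩ := hp
  obtain ⟨hqi, hqi', hqp⟩ := hq
  calc f₂ (Fin.cons ((z i).1, (z j).2) z)
      = f₂ (Fin.cons ((z p).1, (z q).2) z) :=
        apply_cons_eq_of_ne f₂ hcocycle hvanish z hij (Ne.symm hqp) (Ne.symm hqi) hpj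
    _ = f₂ (Fin.cons ((z i').1, (z j').2) z) :=
        apply_cons_eq_of_ne f₂ hcocycle hvanish z (Ne.symm hqp) hij' hpj' (Ne.symm hqi')

/-- If an alternating simplicial cocycle `f₂` vanishes on all 5-tuples `z` with
`n₁(z) + n₂(z) ≤ 7`, then prepending `(x_i, y_j)` to a 4-tuple gives a value independent
of the choice of indices `i ≠ j`. -/
theorem prepend_value_independent (f₂ : (Fin 5 → Circle × Circle) → ℝ)
    (halt : Alternating f₂)
    (hcocycle : ∀ w : Fin 6 → Circle × Circle, cobdry f₂ w = 0)
    (hvanish : ∀ z : Fin 5 → Circle × Circle, ncard₁ z + ncard₂ z ≤ 7 → f₂ z = 0)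
    (z : Fin 4 → Circle × Circle) (i j i' j' : Fin 4)
    (hij : i ≠ j) (hij' : i' ≠ j') :
    f₂ (Fin.cons ((z i).1, (z j).2) z) = f₂ (Fin.cons ((z i').1, (z j').2) z) :=
  prepend_value_independent_general f₂ hcocycle hvanish z i j i' j' hij hij'
end
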